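/- arXiv:1307.0905 — 2 statements merged into one kernel-verified Lean document; each statement's English description precedes it below -/
import Mathlib

section
/- (Ryser's Theorem) Let G and G' be finite simple graphs on the same vertex set N such that every vertex has the same degree in G as in G' (i.e., d(G) = d(G')). Then there exists a finite sequence of two-switches transforming G into G'. -/
/-!
Induct on the number of edges of `G` that are not edges of `G'`. Colour the edges of `G \ G'`
red and those of `G' \ G` blue. Equal degrees force every vertex to have as many red as blue
edges, so an alternating red/blue walk can always be continued and, `V` being finite, it
eventually closes up. On a shortest closed alternating walk `x₀ x₁ x₂ x₃ …` look at the chord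
`x₀x₃` (at `x₁x₄` when `x₀ = x₃`): if it had the colour of `x₀x₁`, the walk could be shortened
by two edges; otherwise a two-switch on these four vertices, in `G` or in `G'`, increases the
number of common edges. Two-switches preserve degrees and can be undone, so this suffices.
-/

/-- `TwoSwitch G G'` holds when `G'` is obtained from `G` by a single
two-switch: for distinct vertices `a, b, c, d` with `{a,b}, {c,d}` edges of `G`
and `{a,d}, {b,c}` non-edges of `G`, the edges `{a,b}`, `{c,d}` are replaced by
`{a,d}`, `{b,c}`. -/
def TwoSwitch {V : Type*} (G G' : SimpleGraph V) : Prop :=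
  ∃ a b c d : V, a ≠ b ∧ a ≠ c ∧ a ≠ d ∧ b ≠ c ∧ b ≠ d ∧ c ≠ d ∧
    G.Adj a b ∧ G.Adj c d ∧ ¬ G.Adj a d ∧ ¬ G.Adj b c ∧
    G' = SimpleGraph.fromEdgeSet
      ((G.edgeSet \ {s(a, b), s(c, d)}) ∪ {s(a, d), s(b, c)})

open Finset

theorem Finset.card_filter_sdiff_union_add {α : Type*} [DecidableEq α] {E P Q : Finset α}
    (p : α → Prop) [DecidablePred p] (hP : P ⊆ E) (hQ : Disjoint Q E) :
    #{x ∈ E \ P ∪ Q | p x} + #{x ∈ P | p x} = #{x ∈ E | p x} + #{x ∈ Q | p x} := by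
  have hdisj : Disjoint (E \ P) Q := (hQ.mono_right sdiff_subset).symm
  rw [filter_union, card_union_of_disjoint (disjoint_filter_filter hdisj), add_right_comm,
    ← card_union_of_disjoint (disjoint_filter_filter sdiff_disjoint), ← filter_union,
    sdiff_union_of_subset hP]

namespace SimpleGraph

variable {V : Type*}

def switch (G : SimpleGraph V) (a b c d : V) : SimpleGraph V :=
  fromEdgeSet ((G.edgeSet \ {s(a, b), s(c, d)}) ∪ {s(a, d), s(b, c)})

structure IsSwitchable (G : SimpleGraph V) (a b c d : V) : Prop where
  ne_ab : a ≠ b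
  ne_ac : a ≠ c
  ne_ad : a ≠ d
  ne_bc : b ≠ c
  ne_bd : b ≠ d
  ne_cd : c ≠ d
  adj_ab : G.Adj a b
  adj_cd : G.Adj c d
  not_adj_ad : ¬G.Adj a d
  not_adj_bc : ¬G.Adj b c

theorem twoSwitch_iff {G G' : SimpleGraph V} :
    TwoSwitch G G' ↔ ∃ a b c d, G.IsSwitchable a b c d ∧ G' = G.switch a b c d := by
  constructor
  · rintro ⟨a, b, c, d, h₁, h₂, h₃, h₄, h₅, h₆, h₇, h₈, h₉, h₁₀, rfl⟩
    exact ⟨a, b, c, d, ⟨h₁, h₂, h₃, h₄, h₅, h₆, h₇, h₈, h₉, h₁₀⟩, rfl⟩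
  · rintro ⟨a, b, c, d, ⟨h₁, h₂, h₃, h₄, h₅, h₆, h₇, h₈, h₉, h₁₀⟩, rfl⟩
    exact ⟨a, b, c, d, h₁, h₂, h₃, h₄, h₅, h₆, h₇, h₈, h₉, h₁₀, rfl⟩

theorem IsSwitchable.twoSwitch {G : SimpleGraph V} {a b c d : V}
    (h : G.IsSwitchable a b c d) : TwoSwitch G (G.switch a b c d) :=
  twoSwitch_iff.2 ⟨a, b, c, d, h, rfl⟩

theorem edgeSet_switch (G : SimpleGraph V) {a b c d : V} (had : a ≠ d) (hbc : b ≠ c) :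
    (G.switch a b c d).edgeSet = (G.edgeSet \ {s(a, b), s(c, d)}) ∪ {s(a, d), s(b, c)} := by
  rw [switch, edgeSet_fromEdgeSet, sdiff_eq_left, Set.disjoint_union_left]
  refine ⟨Set.disjoint_left.2 fun e he => G.not_isDiag_of_mem_edgeSet he.1, ?_⟩
  simp [Set.disjoint_left, had, hbc]

theorem IsSwitchable.switch_reverse {G : SimpleGraph V} {a b c d : V}
    (h : G.IsSwitchable a b c d) : (G.switch a b c d).IsSwitchable a d c b where
  ne_ab := h.ne_ad
  ne_ac := h.ne_ac
  ne_ad := h.ne_ab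
  ne_bc := h.ne_cd.symm
  ne_bd := h.ne_bd.symm
  ne_cd := h.ne_bc.symm
  adj_ab := by simp [switch, h.ne_ad]
  adj_cd := by simp [switch, h.ne_bc.symm, Sym2.eq_swap]
  not_adj_ad := by
    have := h.ne_ab; have := h.ne_ac; have := h.ne_bd
    simp only [switch, fromEdgeSet_adj]
    grind
  not_adj_bc := by
    have := h.ne_ad; have := h.ne_ac; have := h.ne_bd; have := h.ne_bc
    simp only [switch, fromEdgeSet_adj]
    grind

theorem IsSwitchable.switch_switch_reverse {G : SimpleGraph V} {a b c d : V}
    (h : G.IsSwitchable a b c d) : (G.switch a b c d).switch a d c b = G := by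
  have hP : {s(a, b), s(c, d)} ⊆ G.edgeSet := by
    simp [Set.insert_subset_iff, h.adj_ab, h.adj_cd]
  have hQ : Disjoint {s(a, d), s(b, c)} G.edgeSet := by
    simp [Set.disjoint_left, h.not_adj_ad, h.not_adj_bc]
  rw [← edgeSet_inj, edgeSet_switch _ h.ne_ab h.ne_cd.symm, edgeSet_switch _ h.ne_ad h.ne_bc,
    Sym2.eq_swap (a := c) (b := b), Sym2.eq_swap (a := d) (b := c), Set.union_sdiff_right,
    (hQ.symm.mono_left Set.sdiff_subset).sdiff_eq_left, Set.sdiff_union_of_subset hP]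

theorem _root_.TwoSwitch.symm {G G' : SimpleGraph V} (h : TwoSwitch G G') : TwoSwitch G' G := by
  obtain ⟨a, b, c, d, hs, rfl⟩ := twoSwitch_iff.1 h
  simpa only [hs.switch_switch_reverse] using hs.switch_reverse.twoSwitch

def altLayer (G G' : SimpleGraph V) (i : ℕ) : SimpleGraph V :=
  if Even i then G \ G' else G' \ G

theorem altLayer_add_of_even {G G' : SimpleGraph V} {n : ℕ} (hn : Even n) (i : ℕ) :
    altLayer G G' (i + n) = altLayer G G' i := by
  simp [altLayer, Nat.even_add, hn]

def IsAltClosedWalk (G G' : SimpleGraph V) (k : ℕ) (f : ℕ → V) : Prop :=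
  f (2 * k) = f 0 ∧ ∀ i < 2 * k, (altLayer G G' i).Adj (f i) (f (i + 1))

theorem IsAltClosedWalk.shortcut {G G' : SimpleGraph V} {k : ℕ} {f : ℕ → V}
    (hf : IsAltClosedWalk G G' k f) {i : ℕ} (hi : i + 3 ≤ 2 * k)
    (hchord : (altLayer G G' i).Adj (f i) (f (i + 3))) :
    IsAltClosedWalk G G' (k - 1) fun j => f (if j ≤ i then j else j + 2) := by
  refine ⟨?_, fun j hj => ?_⟩
  · simpa [show ¬2 * (k - 1) ≤ i by omega, show 2 * (k - 1) + 2 = 2 * k by omega] using hf.1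
  · rcases lt_trichotomy j i with hji | rfl | hji
    · simpa [hji.le, Nat.succ_le_of_lt hji] using hf.2 j (by omega)
    · simpa using hchord
    · simpa [show ¬j ≤ i by omega, show ¬j + 1 ≤ i by omega, altLayer_add_of_even even_two]
        using hf.2 (j + 2) (by omega)

section Fintype

variable [Fintype V] {G G' : SimpleGraph V}

open scoped Classical

theorem edgeFinset_switch (G : SimpleGraph V) {a b c d : V} (had : a ≠ d) (hbc : b ≠ c) :
    (G.switch a b c d).edgeFinset =
      (G.edgeFinset \ {s(a, b), s(c, d)}) ∪ {s(a, d), s(b, c)} := by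
  rw [← coe_inj]
  push_cast
  exact edgeSet_switch G had hbc

theorem IsSwitchable.card_filter_edgeFinset_switch {a b c d : V} (h : G.IsSwitchable a b c d)
    (p : Sym2 V → Prop) [DecidablePred p] :
    #{e ∈ (G.switch a b c d).edgeFinset | p e} +
        ((if p s(a, b) then 1 else 0) + if p s(c, d) then 1 else 0) =
      #{e ∈ G.edgeFinset | p e} + ((if p s(a, d) then 1 else 0) + if p s(b, c) then 1 else 0) := by
  have hP : {s(a, b), s(c, d)} ⊆ G.edgeFinset := by
    simp [insert_subset_iff, h.adj_ab, h.adj_cd]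
  have hQ : Disjoint {s(a, d), s(b, c)} G.edgeFinset := by
    simp [h.not_adj_ad, h.not_adj_bc]
  have hne₁ : s(a, b) ≠ s(c, d) := by simp [h.ne_ac, h.ne_ad]
  have hne₂ : s(a, d) ≠ s(b, c) := by simp [h.ne_ab, h.ne_ac]
  have hcount := card_filter_sdiff_union_add p hP hQ
  rwa [card_filter p {s(a, b), _}, card_filter p {s(a, d), _}, sum_pair hne₁, sum_pair hne₂,
    ← edgeFinset_switch G h.ne_ad h.ne_bc] at hcount

theorem _root_.TwoSwitch.degree_eq (h : TwoSwitch G G') (v : V) : G'.degree v = G.degree v := by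
  obtain ⟨a, b, c, d, hs, rfl⟩ := twoSwitch_iff.1 h
  have hcount := hs.card_filter_edgeFinset_switch (v ∈ ·)
  -- each of `a, b, c, d` lies on exactly one of `ab, cd` and on exactly one of `ad, bc`
  have hinc : ((if v ∈ s(a, b) then 1 else 0) + if v ∈ s(c, d) then 1 else 0) =
      ((if v ∈ s(a, d) then 1 else 0) + if v ∈ s(b, c) then 1 else 0) := by
    have := hs.ne_ab; have := hs.ne_ac; have := hs.ne_ad
    have := hs.ne_bc; have := hs.ne_bd; have := hs.ne_cd
    simp only [Sym2.mem_iff]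
    split_ifs <;> grind
  rw [← card_incidenceFinset_eq_degree, ← card_incidenceFinset_eq_degree,
    incidenceFinset_eq_filter, incidenceFinset_eq_filter]
  omega

theorem card_edgeFinset_eq_of_degree_eq (hdeg : ∀ v, G.degree v = G'.degree v) :
    #G.edgeFinset = #G'.edgeFinset := by
  have h := G.sum_degrees_eq_twice_card_edges
  rw [Fintype.sum_congr _ _ hdeg, G'.sum_degrees_eq_twice_card_edges] at h
  omega

theorem degree_sdiff_comm (hdeg : ∀ v, G.degree v = G'.degree v) (v : V) :
    (G \ G').degree v = (G' \ G).degree v := by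
  rw [← card_neighborFinset_eq_degree, ← card_neighborFinset_eq_degree, neighborFinset_sdiff,
    neighborFinset_sdiff, card_sdiff, card_sdiff, inter_comm, card_neighborFinset_eq_degree,
    card_neighborFinset_eq_degree, hdeg]

theorem exists_sdiff_adj_iff (hdeg : ∀ v, G.degree v = G'.degree v) (v : V) :
    (∃ u, (G \ G').Adj v u) ↔ ∃ u, (G' \ G).Adj v u := by
  rw [← degree_pos_iff_exists_adj, ← degree_pos_iff_exists_adj, degree_sdiff_comm hdeg]

theorem exists_sdiff_adj_of_ne (hdeg : ∀ v, G.degree v = G'.degree v) (hne : G ≠ G') :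
    ∃ x y, (G \ G').Adj x y := by
  by_contra! h
  refine hne (le_antisymm (fun x y hxy => ?_) fun x y hxy => ?_)
  · by_contra hxy'
    exact h x y ⟨hxy, hxy'⟩
  · by_contra hxy'
    obtain ⟨w, hw⟩ := (exists_sdiff_adj_iff hdeg x).2 ⟨y, hxy, hxy'⟩
    exact h x w hw

theorem exists_adj_altLayer_succ (hdeg : ∀ v, G.degree v = G'.degree v) {i : ℕ} {v u : V}
    (h : (altLayer G G' i).Adj v u) : ∃ w, (altLayer G G' (i + 1)).Adj v w := by
  by_cases hi : Even i
  · simp only [altLayer, hi, Nat.even_add_one, not_true_eq_false, if_false, if_true] at h ⊢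
    exact (exists_sdiff_adj_iff hdeg v).1 ⟨u, h⟩
  · simp only [altLayer, hi, Nat.even_add_one, not_false_eq_true, if_false, if_true] at h ⊢
    exact (exists_sdiff_adj_iff hdeg v).2 ⟨u, h⟩

theorem exists_alternating_walk (hdeg : ∀ v, G.degree v = G'.degree v) {x y : V}
    (hxy : (G \ G').Adj x y) : ∃ f : ℕ → V, ∀ i, (altLayer G G' i).Adj (f i) (f (i + 1)) := by
  have : Nonempty V := ⟨x⟩
  choose! next hnext using fun i v (h : ∃ u, (altLayer G G' i).Adj v u) => h
  let f : ℕ → V := fun n => Nat.rec x (fun i v => next i v) n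
  refine ⟨f, fun i => hnext i (f i) ?_⟩
  induction i with
  | zero => exact ⟨y, by simpa [altLayer, f] using hxy⟩
  | succ i ih => exact exists_adj_altLayer_succ hdeg (hnext i (f i) ih).symm

theorem exists_isAltClosedWalk (hdeg : ∀ v, G.degree v = G'.degree v) (hne : G ≠ G') :
    ∃ k f, 0 < k ∧ IsAltClosedWalk G G' k f := by
  obtain ⟨x, y, hxy⟩ := exists_sdiff_adj_of_ne hdeg hne
  obtain ⟨f, hf⟩ := exists_alternating_walk hdeg hxy
  obtain ⟨i, j, hij, heq⟩ := Finite.exists_ne_map_eq_of_infinite fun i => f (2 * i)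
  wlog hlt : i < j generalizing i j
  · exact this j i hij.symm heq.symm (by omega)
  refine ⟨j - i, fun t => f (2 * i + t), by omega, ?_, fun t _ => ?_⟩
  · simpa [show 2 * i + 2 * (j - i) = 2 * j by omega] using heq.symm
  · rw [← altLayer_add_of_even (even_two_mul i), add_comm t]
    exact hf (2 * i + t)

def HasImprovingSwitch (H K : SimpleGraph V) : Prop :=
  ∃ H₂, TwoSwitch H H₂ ∧ #(H.edgeFinset ∩ K.edgeFinset) < #(H₂.edgeFinset ∩ K.edgeFinset)

theorem IsSwitchable.hasImprovingSwitch {H K : SimpleGraph V} {a b c d : V}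
    (h : H.IsSwitchable a b c d)
    (hgain : (if K.Adj a b then 1 else 0) + (if K.Adj c d then 1 else 0) <
      (if K.Adj a d then 1 else 0) + (if K.Adj b c then 1 else 0)) :
    HasImprovingSwitch H K := by
  refine ⟨_, h.twoSwitch, ?_⟩
  have hcount := h.card_filter_edgeFinset_switch (· ∈ K.edgeFinset)
  rw [filter_mem_eq_inter, filter_mem_eq_inter] at hcount
  simp only [mem_edgeFinset, mem_edgeSet] at hcount
  omega

/-- If the chord `p₀p₃` is a non-edge of `H`, switch `H` along `p₁p₀, p₃p₂`; if it is an edge of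
both graphs, switch `K` along `p₂p₁, p₀p₃`. -/
theorem hasImprovingSwitch_of_alternating_path {H K : SimpleGraph V} {p₀ p₁ p₂ p₃ : V}
    (h₀₁ : (H \ K).Adj p₀ p₁) (h₁₂ : (K \ H).Adj p₁ p₂) (h₂₃ : (H \ K).Adj p₂ p₃)
    (h₀₃ : p₀ ≠ p₃) (hchord : ¬(H \ K).Adj p₀ p₃) :
    HasImprovingSwitch H K ∨ HasImprovingSwitch K H := by
  simp only [sdiff_adj] at h₀₁ h₁₂ h₂₃ hchord
  have h₀₂ : p₀ ≠ p₂ := by rintro rfl; exact h₁₂.2 h₀₁.1.symm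
  have h₁₃ : p₁ ≠ p₃ := by rintro rfl; exact h₂₃.2 h₁₂.1.symm
  by_cases hH : H.Adj p₀ p₃
  · have hK : K.Adj p₀ p₃ := by tauto
    right
    refine IsSwitchable.hasImprovingSwitch
      ⟨h₁₂.1.ne.symm, h₀₂.symm, h₂₃.1.ne, h₀₁.1.ne.symm, h₁₃, h₀₃, h₁₂.1.symm, hK,
        h₂₃.2, fun h => h₀₁.2 h.symm⟩ ?_
    simp [hH, h₂₃.1, h₀₁.1.symm, H.adj_comm p₂ p₁, h₁₂.2]
  · left
    refine IsSwitchable.hasImprovingSwitch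
      ⟨h₀₁.1.ne.symm, h₁₃, h₁₂.1.ne, h₀₃, h₀₂, h₂₃.1.ne.symm, h₀₁.1.symm, h₂₃.1.symm,
        h₁₂.2, hH⟩ ?_
    simp [K.adj_comm p₁ p₀, K.adj_comm p₃ p₂, h₀₁.2, h₂₃.2, h₁₂.1]

theorem IsAltClosedWalk.hasImprovingSwitch {k : ℕ} {f : ℕ → V} (hk : 0 < k)
    (hf : IsAltClosedWalk G G' k f) : HasImprovingSwitch G G' ∨ HasImprovingSwitch G' G := by
  induction k using Nat.strong_induction_on generalizing f with
  | _ k ih =>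
  have h₀ : (G \ G').Adj (f 0) (f 1) := by simpa [altLayer] using hf.2 0 (by omega)
  have h₁ : (G' \ G).Adj (f 1) (f 2) := by simpa [altLayer] using hf.2 1 (by omega)
  have hk₂ : 2 ≤ k := by
    by_contra hk₂
    have h₂₀ : f 2 = f 0 := by simpa [show k = 1 by omega] using hf.1
    exact h₁.2 (h₂₀ ▸ h₀.1.symm)
  have h₂ : (G \ G').Adj (f 2) (f 3) := by simpa [altLayer] using hf.2 2 (by omega)
  have h₃ : (G' \ G).Adj (f 3) (f 4) := by
    simpa [altLayer, Nat.even_add_one] using hf.2 3 (by omega)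
  have shorter (i : ℕ) (hi : i + 3 ≤ 2 * k) (hchord : (altLayer G G' i).Adj (f i) (f (i + 3))) :
      HasImprovingSwitch G G' ∨ HasImprovingSwitch G' G :=
    ih (k - 1) (by omega) (by omega) (hf.shortcut hi hchord)
  by_cases h₀₃ : f 0 = f 3
  · have h₁₄ : f 1 ≠ f 4 := fun h => h₀.2 (by rw [h₀₃, h]; exact h₃.1)
    by_cases hchord : (G' \ G).Adj (f 1) (f 4)
    · exact shorter 1 (by omega) (by simpa [altLayer] using hchord)
    · exact (hasImprovingSwitch_of_alternating_path h₁ h₂ h₃ h₁₄ hchord).symm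
  · by_cases hchord : (G \ G').Adj (f 0) (f 3)
    · exact shorter 0 (by omega) (by simpa [altLayer] using hchord)
    · exact hasImprovingSwitch_of_alternating_path h₀ h₁ h₂ h₀₃ hchord

end Fintype

end SimpleGraph

open SimpleGraph

open scoped Classical in
theorem stmt_8 {V : Type*} [Fintype V] (G G' : SimpleGraph V)
    (hdeg : ∀ v : V, G.degree v = G'.degree v) :
    Relation.ReflTransGen TwoSwitch G G' := by
  induction hn : #G.edgeFinset - #(G.edgeFinset ∩ G'.edgeFinset) using Nat.strong_induction_on
    generalizing G G' with
  | _ n ih =>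
  by_cases hGG : G = G'
  · exact hGG ▸ .refl
  have hcommon (H K : SimpleGraph V) : #(H.edgeFinset ∩ K.edgeFinset) ≤ #H.edgeFinset :=
    card_le_card inter_subset_left
  obtain ⟨k, f, hk, hf⟩ := exists_isAltClosedWalk hdeg hGG
  obtain ⟨G₂, hsw, hlt⟩ | ⟨G₂, hsw, hlt⟩ := hf.hasImprovingSwitch hk
  · have hdeg₂ (v : V) : G₂.degree v = G'.degree v := (hsw.degree_eq v).trans (hdeg v)
    have hcard := card_edgeFinset_eq_of_degree_eq hsw.degree_eq
    exact .head hsw (ih _ (by have := hcommon G₂ G'; omega) G₂ G' hdeg₂ rfl)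
  · have hdeg₂ (v : V) : G.degree v = G₂.degree v := (hdeg v).trans (hsw.degree_eq v).symm
    rw [inter_comm, inter_comm G₂.edgeFinset] at hlt
    exact (ih _ (by have := hcommon G G₂; omega) G G₂ hdeg₂ rfl).tail hsw.symm
end

section
/- Let G = (N, E) be a finite simple graph, let {a,b} ∈ E and {c,d} ∈ E be edges lying in two different connected components C₁ and C₂ of G respectively, and suppose {a,b} is not a bridge of G (i.e., a and b remain connected after deleting the edge {a,b}). Then in the graph G' obtained by the two-switch replacing {a,b} and {c,d} by {a,d} and {b,c}, all vertices of C₁ ∪ C₂ lie in a single connected component, and the number of connected components of G' is exactly one less than the number of connected components of G. -/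
/-!
A walk from `a` to `b` avoiding `{a,b}` stays in the component of `a`, so it also avoids `{c,d}` and
survives the two-switch. Together with the new edges `{b,c}` and `{a,d}` it reconnects the
endpoints of both removed edges, so the switched graph has the same reachability relation as
`G ⊔ edge a c`. Adding an edge between two distinct components merges exactly these two.
-/

open Function

theorem Nat.card_subtype_ne_add_one {α : Type*} [Finite α] (a : α) :
    Nat.card {x // x ≠ a} + 1 = Nat.card α := by
  classical
  have := Fintype.ofFinite α
  rw [Nat.card_eq_fintype_card, Nat.card_eq_fintype_card, Fintype.card_subtype_compl,
    Fintype.card_subtype_eq]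
  have := Fintype.card_pos_iff.mpr ⟨a⟩
  omega

namespace SimpleGraph

variable {V : Type*} {G H : SimpleGraph V}

theorem reachable_le_reachable_of_adj_le (h : G.Adj ≤ H.Reachable) :
    G.Reachable ≤ H.Reachable := by
  rw [reachable_eq_reflTransGen] at h
  rw [reachable_eq_reflTransGen, reachable_eq_reflTransGen]
  exact Relation.reflTransGen_closed h

theorem Reachable.deleteEdges_of_not_reachable {u v w x : V} (h : G.Reachable u v)
    (hw : ¬G.Reachable u w) : (G.deleteEdges {s(w, x)}).Reachable u v := by
  classical
  obtain ⟨p⟩ := h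
  refine ⟨p.toDeleteEdges _ fun e he hew => hw ?_⟩
  rw [Set.mem_singleton_iff] at hew
  subst hew
  exact ⟨p.takeUntil w (p.fst_mem_support_of_mem_edges he)⟩

theorem reachable_sup_edge_iff {x y u v : V} :
    (G ⊔ edge x y).Reachable u v ↔
      G.Reachable u v ∨ G.Reachable u x ∧ G.Reachable y v ∨
        G.Reachable u y ∧ G.Reachable x v := by
  constructor
  · rintro ⟨p⟩
    induction p with
    | nil => exact .inl .rfl
    | cons h _ ih =>
      rw [sup_adj, edge_adj] at h
      rcases h with h | ⟨⟨rfl, rfl⟩ | ⟨rfl, rfl⟩, -⟩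
      · have := h.reachable
        rcases ih with h' | ⟨h₁, h₂⟩ | ⟨h₁, h₂⟩
        · exact .inl (this.trans h')
        · exact .inr (.inl ⟨this.trans h₁, h₂⟩)
        · exact .inr (.inr ⟨this.trans h₁, h₂⟩)
      · rcases ih with h' | ⟨h₁, h₂⟩ | ⟨-, h₂⟩
        · exact .inr (.inl ⟨.rfl, h'⟩)
        · exact .inl (h₁.symm.trans h₂)
        · exact .inl h₂
      · rcases ih with h' | ⟨-, h₂⟩ | ⟨h₁, h₂⟩
        · exact .inr (.inr ⟨.rfl, h'⟩)
        · exact .inl h₂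
        · exact .inl (h₁.symm.trans h₂)
  · have hxy : (G ⊔ edge x y).Reachable x y := by
      by_cases hne : x = y
      · exact hne ▸ .rfl
      · exact Adj.reachable (by simp [edge_adj, hne])
    have hG : ∀ {u v}, G.Reachable u v → (G ⊔ edge x y).Reachable u v := .mono le_sup_left
    rintro (h | ⟨h₁, h₂⟩ | ⟨h₁, h₂⟩)
    · exact hG h
    · exact (hG h₁).trans (hxy.trans (hG h₂))
    · exact (hG h₁).trans (hxy.symm.trans (hG h₂))

theorem card_connectedComponent_eq_of_reachable_eq (h : G.Reachable = H.Reachable) :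
    Nat.card G.ConnectedComponent = Nat.card H.ConnectedComponent :=
  Nat.card_congr (Quot.congrRight fun _ _ => by rw [h])

theorem card_connectedComponent_sup_edge_add_one [Finite V] {x y : V} (h : ¬G.Reachable x y) :
    Nat.card (G ⊔ edge x y).ConnectedComponent + 1 = Nat.card G.ConnectedComponent := by
  set φ := ConnectedComponent.map (Hom.ofLE (le_sup_left : G ≤ G ⊔ edge x y))
  have hφ : ∀ u v, φ (G.connectedComponentMk u) = φ (G.connectedComponentMk v) ↔
      (G ⊔ edge x y).Reachable u v := fun u v => by
    simp only [φ, ConnectedComponent.map_mk, Hom.ofLE_apply, ConnectedComponent.eq]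
  have hbij : Bijective fun C : {C // C ≠ G.connectedComponentMk y} => φ C := by
    refine ⟨?_, fun D => ?_⟩
    · rintro ⟨C, hC⟩ ⟨D, hD⟩ hCD
      induction C using ConnectedComponent.ind
      induction D using ConnectedComponent.ind
      simp only [ne_eq, ConnectedComponent.eq] at hC hD
      simp only [hφ, reachable_sup_edge_iff] at hCD
      simp only [Subtype.mk.injEq, ConnectedComponent.eq]
      rcases hCD with h' | ⟨-, h'⟩ | ⟨h', -⟩
      · exact h'
      · exact absurd h'.symm hD
      · exact absurd h' hC
    · obtain ⟨⟨v⟩, rfl⟩ := ConnectedComponent.surjective_map_ofLE le_sup_left D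
      by_cases hv : G.Reachable v y
      · refine ⟨⟨G.connectedComponentMk x, mt ConnectedComponent.exact h⟩, ?_⟩
        exact (hφ x v).2 (reachable_sup_edge_iff.2 (.inr (.inl ⟨.rfl, hv.symm⟩)))
      · exact ⟨⟨G.connectedComponentMk v, mt ConnectedComponent.exact hv⟩, rfl⟩
  rw [← Nat.card_eq_of_bijective _ hbij, Nat.card_subtype_ne_add_one]

def twoSwitch (G : SimpleGraph V) (a b c d : V) : SimpleGraph V :=
  fromEdgeSet ((G.edgeSet \ {s(a, b), s(c, d)}) ∪ {s(a, d), s(b, c)})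

section TwoSwitch

variable {a b c d : V}

theorem deleteEdges_le_twoSwitch : G.deleteEdges {s(a, b), s(c, d)} ≤ G.twoSwitch a b c d :=
  fun u v huv => by
    rw [deleteEdges_adj] at huv
    simp [twoSwitch, huv.1, huv.2, huv.1.ne]

theorem twoSwitch_adj_left (h : a ≠ d) : (G.twoSwitch a b c d).Adj a d := by
  simp [twoSwitch, h]

theorem twoSwitch_adj_right (h : b ≠ c) : (G.twoSwitch a b c d).Adj b c := by
  simp [twoSwitch, h]

theorem twoSwitch_adj_le_reachable_sup_edge (hab : G.Reachable a b) (hcd : G.Reachable c d) :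
    (G.twoSwitch a b c d).Adj ≤ (G ⊔ edge a c).Reachable := by
  intro u v huv
  simp only [twoSwitch, fromEdgeSet_adj, Set.mem_union, Set.mem_sdiff, mem_edgeSet,
    Set.mem_insert_iff, Set.mem_singleton_iff, Sym2.eq_iff] at huv
  rw [reachable_sup_edge_iff]
  rcases huv.1 with ⟨h, -⟩ | (⟨rfl, rfl⟩ | ⟨rfl, rfl⟩) | ⟨rfl, rfl⟩ | ⟨rfl, rfl⟩
  · exact .inl h.reachable
  · exact .inr (.inl ⟨.rfl, hcd⟩)
  · exact .inr (.inr ⟨hcd.symm, .rfl⟩)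
  · exact .inr (.inl ⟨hab.symm, .rfl⟩)
  · exact .inr (.inr ⟨.rfl, hab⟩)

theorem sup_edge_adj_le_reachable_twoSwitch (hab : (G.deleteEdges {s(a, b)}).Reachable a b)
    (hcd : G.Reachable c d) (hac : ¬G.Reachable a c) :
    (G ⊔ edge a c).Adj ≤ (G.twoSwitch a b c d).Reachable := by
  have hab' : (G.twoSwitch a b c d).Reachable a b := by
    have := hab.deleteEdges_of_not_reachable (x := d)
      fun h => hac (h.mono (G.deleteEdges_le _))
    rw [deleteEdges_deleteEdges, Set.singleton_union] at this
    exact this.mono deleteEdges_le_twoSwitch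
  have hbc : (G.twoSwitch a b c d).Adj b c :=
    twoSwitch_adj_right fun h => hac (h ▸ hab.mono (G.deleteEdges_le _))
  have had : (G.twoSwitch a b c d).Adj a d :=
    twoSwitch_adj_left fun h => hac (h ▸ hcd.symm)
  have hac' := hab'.trans hbc.reachable
  have hcd' := hac'.symm.trans had.reachable
  intro u v huv
  rw [sup_adj, edge_adj] at huv
  rcases huv with huv | ⟨⟨rfl, rfl⟩ | ⟨rfl, rfl⟩, -⟩
  · by_cases hsab : s(u, v) = s(a, b)
    · rcases Sym2.eq_iff.1 hsab with ⟨rfl, rfl⟩ | ⟨rfl, rfl⟩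
      exacts [hab', hab'.symm]
    by_cases hscd : s(u, v) = s(c, d)
    · rcases Sym2.eq_iff.1 hscd with ⟨rfl, rfl⟩ | ⟨rfl, rfl⟩
      exacts [hcd', hcd'.symm]
    refine Adj.reachable (deleteEdges_le_twoSwitch ?_)
    simp [huv, hsab, hscd]
  exacts [hac', hac'.symm]

theorem reachable_twoSwitch_eq (hab : (G.deleteEdges {s(a, b)}).Reachable a b)
    (hcd : G.Reachable c d) (hac : ¬G.Reachable a c) :
    (G.twoSwitch a b c d).Reachable = (G ⊔ edge a c).Reachable :=
  le_antisymm
    (reachable_le_reachable_of_adj_le <| twoSwitch_adj_le_reachable_sup_edge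
      (hab.mono (G.deleteEdges_le _)) hcd)
    (reachable_le_reachable_of_adj_le <| sup_edge_adj_le_reachable_twoSwitch hab hcd hac)

end TwoSwitch

end SimpleGraph

open SimpleGraph in
theorem stmt_10_general {V : Type*} [Fintype V] (G : SimpleGraph V) (a b c d : V)
    (hcd : G.Adj c d)
    (hcomp : G.connectedComponentMk a ≠ G.connectedComponentMk c)
    (hnotbridge : (G.deleteEdges {s(a, b)}).Reachable a b) :
    (∀ v : V,
      (G.connectedComponentMk v = G.connectedComponentMk a ∨
        G.connectedComponentMk v = G.connectedComponentMk c) →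
      (SimpleGraph.fromEdgeSet
          ((G.edgeSet \ {s(a, b), s(c, d)}) ∪ {s(a, d), s(b, c)})).connectedComponentMk v =
        (SimpleGraph.fromEdgeSet
          ((G.edgeSet \ {s(a, b), s(c, d)}) ∪ {s(a, d), s(b, c)})).connectedComponentMk a) ∧
    Nat.card (SimpleGraph.fromEdgeSet
        ((G.edgeSet \ {s(a, b), s(c, d)}) ∪ {s(a, d), s(b, c)})).ConnectedComponent + 1 =
      Nat.card G.ConnectedComponent := by
  have hac : ¬G.Reachable a c := fun h => hcomp (ConnectedComponent.sound h)
  have hG' := reachable_twoSwitch_eq hnotbridge hcd.reachable hac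
  refine ⟨fun v hv => ?_, ?_⟩
  · change (G.twoSwitch a b c d).connectedComponentMk v =
      (G.twoSwitch a b c d).connectedComponentMk a
    rw [ConnectedComponent.eq, hG', reachable_sup_edge_iff]
    simp only [ConnectedComponent.eq] at hv
    rcases hv with hva | hvc
    · exact .inl hva
    · exact .inr (.inr ⟨hvc, .rfl⟩)
  · change Nat.card (G.twoSwitch a b c d).ConnectedComponent + 1 = _
    rw [card_connectedComponent_eq_of_reachable_eq hG']
    exact card_connectedComponent_sup_edge_add_one hac

theorem stmt_10 {V : Type*} [Fintype V] (G : SimpleGraph V) (a b c d : V)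
    (hab : G.Adj a b) (hcd : G.Adj c d)
    (hcomp : G.connectedComponentMk a ≠ G.connectedComponentMk c)
    (hnotbridge : (G.deleteEdges {s(a, b)}).Reachable a b) :
    (∀ v : V,
      (G.connectedComponentMk v = G.connectedComponentMk a ∨
        G.connectedComponentMk v = G.connectedComponentMk c) →
      (SimpleGraph.fromEdgeSet
          ((G.edgeSet \ {s(a, b), s(c, d)}) ∪ {s(a, d), s(b, c)})).connectedComponentMk v =
        (SimpleGraph.fromEdgeSet
          ((G.edgeSet \ {s(a, b), s(c, d)}) ∪ {s(a, d), s(b, c)})).connectedComponentMk a) ∧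
    Nat.card (SimpleGraph.fromEdgeSet
        ((G.edgeSet \ {s(a, b), s(c, d)}) ∪ {s(a, d), s(b, c)})).ConnectedComponent + 1 =
      Nat.card G.ConnectedComponent :=
  stmt_10_general G a b c d hcd hcomp hnotbridge
end
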